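/- Let m be an integer with 2 ≤ m ≤ 5, set N = ⌊255/m⌋ + 1, h = m/510, and grid values g_i = m(i−1)/255 for i = 1, …, N, and let φ_t denote the ReLU hat function of half-width h centered at t. For x ∈ ℝ⁹ define I₁(x) = Σ_{j=1}^{9} Σ_{i : g_i ≥ 128/255} φ_{g_i}(x_j) − b and I₂(x) = Σ_{j=1}^{9} Σ_{i : g_i < 128/255} φ_{g_i}(x_j) − b, and f(x) = ReLU(I₁(x))/(9 − b) − ReLU(I₂(x))/(9 − b). Suppose b ∈ (9 − 2/m, 9). Then: (i) f(x) = 1 for every x with all nine coordinates in {g_i : g_i ≥ 128/255} ('light' training images) and f(x) = −1 for every x with all nine coordinates in {g_i : g_i < 128/255} ('dark' training images); and (ii) f(p) = 0 for every point p ∈ {k/255 : k = 0, 1, …, 255}⁹ that is not one of these training images. -/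

import Mathlib

noncomputable def relu (x : ℝ) : ℝ := max x 0

/-- The one-dimensional ReLU hat function of half-width `h` centered at `t`. -/
noncomputable def hat (h t x : ℝ) : ℝ :=
  (1 / h) * relu (x - t + h) - (2 / h) * relu (x - t) + (1 / h) * relu (x - t - h)

lemma hat_closed {h : ℝ} (hh : 0 < h) (t x : ℝ) :
    hat h t x = max (1 - |x - t| / h) 0 := by
  have hne : h ≠ 0 := ne_of_gt hh
  unfold hat relu
  rcases le_total (x - t) 0 with hd | hd
  · rw [abs_of_nonpos hd]
    rcases le_total (x - t) (-h) with h1 | h1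
    · rw [max_eq_right (by linarith : x - t + h ≤ 0), max_eq_right hd,
        max_eq_right (by linarith : x - t - h ≤ 0), max_eq_right ?_]
      · ring
      · have : 1 ≤ -(x - t) / h := (le_div_iff₀ hh).2 (by linarith)
        linarith
    · rw [max_eq_left (by linarith : 0 ≤ x - t + h), max_eq_right hd,
        max_eq_right (by linarith : x - t - h ≤ 0), max_eq_left ?_]
      · field_simp; ring
      · have : -(x - t) / h ≤ 1 := (div_le_one hh).2 (by linarith)
        linarith
  · rw [abs_of_nonneg hd]
    rcases le_total (x - t) h with h1 | h1
    · rw [max_eq_left (by linarith : 0 ≤ x - t + h), max_eq_left hd,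
        max_eq_right (by linarith : x - t - h ≤ 0), max_eq_left ?_]
      · field_simp; ring
      · have : (x - t) / h ≤ 1 := (div_le_one hh).2 h1
        linarith
    · rw [max_eq_left (by linarith : 0 ≤ x - t + h), max_eq_left hd,
        max_eq_left (by linarith : 0 ≤ x - t - h), max_eq_right ?_]
      · field_simp; ring
      · have : 1 ≤ (x - t) / h := (le_div_iff₀ hh).2 (by linarith)
        linarith

lemma hat_nonneg {h : ℝ} (hh : 0 < h) (t x : ℝ) : 0 ≤ hat h t x := by
  rw [hat_closed hh]; exact le_max_right _ _

lemma hat_self {h : ℝ} (hh : 0 < h) (t : ℝ) : hat h t t = 1 := by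
  rw [hat_closed hh]; simp

lemma hat_eq_zero {h t x : ℝ} (hh : 0 < h) (hd : h ≤ |x - t|) : hat h t x = 0 := by
  rw [hat_closed hh]
  apply max_eq_right
  have : 1 ≤ |x - t| / h := (le_div_iff₀ hh).2 (by linarith)
  linarith

lemma hat_lt_of_pos {h t x : ℝ} (hh : 0 < h) (hp : 0 < hat h t x) : |x - t| < h := by
  by_contra hc
  push_neg at hc
  rw [hat_eq_zero hh hc] at hp
  exact lt_irrefl 0 hp

lemma hat_le {h t x c : ℝ} (hh : 0 < h) (hc : c ≤ h) (hd : c ≤ |x - t|) :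
    hat h t x ≤ 1 - c / h := by
  rw [hat_closed hh]
  apply max_le
  · have : c / h ≤ |x - t| / h := by gcongr
    linarith
  · have : c / h ≤ 1 := (div_le_one hh).2 hc
    linarith

lemma gdiff (m : ℕ) (g : ℕ → ℝ) (hg : ∀ i, g i = (m : ℝ) * ((i : ℝ) - 1) / 255)
    {i j : ℕ} (hij : i ≠ j) : (m : ℝ) / 255 ≤ |g i - g j| := by
  have h1 : (1 : ℝ) ≤ |(i : ℝ) - (j : ℝ)| := by
    have h0 : (i : ℤ) ≠ (j : ℤ) := by exact_mod_cast hij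
    have h2 : (1 : ℤ) ≤ |(i : ℤ) - (j : ℤ)| := Int.one_le_abs (sub_ne_zero.mpr h0)
    exact_mod_cast h2
  have e : g i - g j = ((m : ℝ) / 255) * ((i : ℝ) - (j : ℝ)) := by rw [hg, hg]; ring
  have hpos : (0 : ℝ) ≤ (m : ℝ) / 255 := by positivity
  rw [e, abs_mul, abs_of_nonneg hpos]
  nlinarith

lemma sum_hat_eq_one (m : ℕ) (hm2 : 2 ≤ m) (h : ℝ) (hh : h = (m : ℝ) / 510)
    (g : ℕ → ℝ) (hg : ∀ i, g i = (m : ℝ) * ((i : ℝ) - 1) / 255)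
    (S : Finset ℕ) (i₀ : ℕ) (hi₀ : i₀ ∈ S) (x : ℝ) (hx : x = g i₀) :
    ∑ i ∈ S, hat h (g i) x = 1 := by
  have hmr : (2 : ℝ) ≤ (m : ℝ) := by exact_mod_cast hm2
  have hhp : 0 < h := by rw [hh]; linarith
  rw [Finset.sum_eq_single_of_mem i₀ hi₀]
  · rw [hx]; exact hat_self hhp _
  · intro i hi hne
    apply hat_eq_zero hhp
    rw [hx]
    have := gdiff m g hg (show i₀ ≠ i from fun e => hne e.symm)
    rw [hh]; linarith

lemma sum_hat_le (m : ℕ) (hm2 : 2 ≤ m) (h : ℝ) (hh : h = (m : ℝ) / 510)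
    (g : ℕ → ℝ) (hg : ∀ i, g i = (m : ℝ) * ((i : ℝ) - 1) / 255)
    (S : Finset ℕ) (hS : ∀ i ∈ S, 1 ≤ i)
    (k : ℕ) (x : ℝ) (hx : x = (k : ℝ) / 255) (hne : ∀ i ∈ S, g i ≠ x) :
    ∑ i ∈ S, hat h (g i) x ≤ 1 - 2 / (m : ℝ) := by
  have hmr : (2 : ℝ) ≤ (m : ℝ) := by exact_mod_cast hm2
  have hhp : 0 < h := by rw [hh]; linarith
  have hcle : (1 : ℝ) / 255 ≤ h := by rw [hh]; nlinarith
  have key : ∀ i ∈ S, hat h (g i) x ≤ 1 - 2 / (m : ℝ) := by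
    intro i hi
    have hi1 := hS i hi
    have ecast : g i = ((m * (i - 1) : ℕ) : ℝ) / 255 := by
      rw [hg]
      push_cast [Nat.cast_sub hi1]
      ring
    have hkne : (m * (i - 1) : ℕ) ≠ k := by
      intro e
      apply hne i hi
      rw [ecast, hx, e]
    have h1 : (1 : ℝ) ≤ |(k : ℝ) - ((m * (i - 1) : ℕ) : ℝ)| := by
      have h0 : ((m * (i - 1) : ℕ) : ℤ) ≠ (k : ℤ) := by exact_mod_cast hkne
      have h2 : (1 : ℤ) ≤ |(k : ℤ) - ((m * (i - 1) : ℕ) : ℤ)| :=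
        Int.one_le_abs (sub_ne_zero.mpr (fun e => h0 e.symm))
      exact_mod_cast h2
    have hdist : (1 : ℝ) / 255 ≤ |x - g i| := by
      rw [hx, ecast]
      rw [show (k : ℝ) / 255 - ((m * (i - 1) : ℕ) : ℝ) / 255
          = ((k : ℝ) - ((m * (i - 1) : ℕ) : ℝ)) / 255 by ring]
      rw [abs_div, abs_of_nonneg (by norm_num : (0:ℝ) ≤ (255:ℝ))]
      linarith
    have := hat_le hhp hcle hdist
    have he : (1 : ℝ) / 255 / h = 2 / (m : ℝ) := by
      rw [hh]; field_simp; ring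
    rw [he] at this
    exact this
  by_cases hp : ∃ i ∈ S, 0 < hat h (g i) x
  · obtain ⟨i₁, hi₁, hpos⟩ := hp
    rw [Finset.sum_eq_single_of_mem i₁ hi₁ ?_]
    · exact key i₁ hi₁
    · intro i hi hnei
      by_contra hne0
      have hp1 : 0 < hat h (g i) x := lt_of_le_of_ne (hat_nonneg hhp _ _) (Ne.symm hne0)
      have d1 := hat_lt_of_pos hhp hp1
      have d2 := hat_lt_of_pos hhp hpos
      have hd := gdiff m g hg hnei
      have htri : |g i - g i₁| ≤ |x - g i| + |x - g i₁| := by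
        calc |g i - g i₁| = |(x - g i₁) - (x - g i)| := by ring_nf
          _ ≤ |x - g i₁| + |x - g i| := abs_sub _ _
          _ = |x - g i| + |x - g i₁| := by ring
      rw [hh] at d1 d2
      linarith
  · push_neg at hp
    rw [Finset.sum_eq_zero (fun i hi => le_antisymm (hp i hi) (hat_nonneg hhp _ _))]
    have : 2 / (m : ℝ) ≤ 1 := by
      rw [div_le_one (by linarith)]; linarith
    linarith

lemma sum_hat_le_one (m : ℕ) (hm2 : 2 ≤ m) (h : ℝ) (hh : h = (m : ℝ) / 510)
    (g : ℕ → ℝ) (hg : ∀ i, g i = (m : ℝ) * ((i : ℝ) - 1) / 255)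
    (S : Finset ℕ) (hS : ∀ i ∈ S, 1 ≤ i)
    (k : ℕ) (x : ℝ) (hx : x = (k : ℝ) / 255) :
    ∑ i ∈ S, hat h (g i) x ≤ 1 := by
  have hmr : (2 : ℝ) ≤ (m : ℝ) := by exact_mod_cast hm2
  by_cases he : ∃ i ∈ S, g i = x
  · obtain ⟨i₀, hi₀, hgi⟩ := he
    rw [sum_hat_eq_one m hm2 h hh g hg S i₀ hi₀ x hgi.symm]
  · push_neg at he
    have := sum_hat_le m hm2 h hh g hg S hS k x hx he
    have h2 : (0:ℝ) < 2 / (m : ℝ) := by positivity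
    linarith

lemma sum_hat_nonneg (m : ℕ) (hm2 : 2 ≤ m) (h : ℝ) (hh : h = (m : ℝ) / 510)
    (g : ℕ → ℝ) (S : Finset ℕ) (x : ℝ) :
    0 ≤ ∑ i ∈ S, hat h (g i) x := by
  have hmr : (2 : ℝ) ≤ (m : ℝ) := by exact_mod_cast hm2
  have hhp : 0 < h := by rw [hh]; linarith
  exact Finset.sum_nonneg fun i _ => hat_nonneg hhp _ _

/-- the 3×3-pixel image classification network classifies all
training images correctly but outputs 0 on every other 3×3 grayscale image. -/
theorem stmt_12 (m : ℕ) (hm : 2 ≤ m ∧ m ≤ 5)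
    (N : ℕ) (hN : N = 255 / m + 1)
    (h : ℝ) (hh : h = (m : ℝ) / 510)
    (g : ℕ → ℝ) (hg : ∀ i, g i = (m : ℝ) * ((i : ℝ) - 1) / 255)
    (b : ℝ) (hb : 9 - 2 / (m : ℝ) < b ∧ b < 9)
    (I₁ I₂ f : (Fin 9 → ℝ) → ℝ)
    (hI₁ : ∀ x : Fin 9 → ℝ, I₁ x =
      (∑ j : Fin 9, ∑ i ∈ (Finset.Icc 1 N).filter (fun i => (128 : ℝ) / 255 ≤ g i),
        hat h (g i) (x j)) - b)
    (hI₂ : ∀ x : Fin 9 → ℝ, I₂ x =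
      (∑ j : Fin 9, ∑ i ∈ (Finset.Icc 1 N).filter (fun i => g i < (128 : ℝ) / 255),
        hat h (g i) (x j)) - b)
    (hf : ∀ x, f x = relu (I₁ x) / (9 - b) - relu (I₂ x) / (9 - b)) :
    (∀ x : Fin 9 → ℝ,
      (∀ j, ∃ i ∈ Finset.Icc 1 N, x j = g i ∧ (128 : ℝ) / 255 ≤ g i) → f x = 1) ∧
    (∀ x : Fin 9 → ℝ,
      (∀ j, ∃ i ∈ Finset.Icc 1 N, x j = g i ∧ g i < (128 : ℝ) / 255) → f x = -1) ∧
    (∀ p : Fin 9 → ℝ,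
      (∀ j, ∃ k : ℕ, k ≤ 255 ∧ p j = (k : ℝ) / 255) →
      ¬ (∀ j, ∃ i ∈ Finset.Icc 1 N, p j = g i ∧ (128 : ℝ) / 255 ≤ g i) →
      ¬ (∀ j, ∃ i ∈ Finset.Icc 1 N, p j = g i ∧ g i < (128 : ℝ) / 255) →
      f p = 0) := by
  obtain ⟨hm2, hm5⟩ := hm
  obtain ⟨hb1, hb2⟩ := hb
  have hmr : (2 : ℝ) ≤ (m : ℝ) := by exact_mod_cast hm2
  have h9b : 0 < 9 - b := by linarith
  have hhp : 0 < h := by rw [hh]; linarith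
  have h2m : (0 : ℝ) < 2 / (m : ℝ) := by positivity
  set S₁ : Finset ℕ := (Finset.Icc 1 N).filter (fun i => (128 : ℝ) / 255 ≤ g i) with hS₁def
  set S₂ : Finset ℕ := (Finset.Icc 1 N).filter (fun i => g i < (128 : ℝ) / 255) with hS₂def
  have hS₁1 : ∀ i ∈ S₁, 1 ≤ i := fun i hi =>
    (Finset.mem_Icc.1 (Finset.mem_filter.1 hi).1).1
  have hS₂1 : ∀ i ∈ S₂, 1 ≤ i := fun i hi =>
    (Finset.mem_Icc.1 (Finset.mem_filter.1 hi).1).1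
  -- a grid point is a pixel value
  have hgrid : ∀ i : ℕ, 1 ≤ i → g i = ((m * (i - 1) : ℕ) : ℝ) / 255 := by
    intro i hi1
    rw [hg]
    push_cast [Nat.cast_sub hi1]
    ring
  refine ⟨?_, ?_, ?_⟩
  · -- light images
    intro x hx
    have e1 : ∀ j : Fin 9, ∑ i ∈ S₁, hat h (g i) (x j) = 1 := by
      intro j
      obtain ⟨i, hiIcc, hxe, hl⟩ := hx j
      exact sum_hat_eq_one m hm2 h hh g hg S₁ i (Finset.mem_filter.2 ⟨hiIcc, hl⟩) _ hxe
    have e2 : ∀ j : Fin 9, ∑ i ∈ S₂, hat h (g i) (x j) ≤ 1 - 2 / (m : ℝ) := by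
      intro j
      obtain ⟨i, hiIcc, hxe, hl⟩ := hx j
      have hi1 : 1 ≤ i := (Finset.mem_Icc.1 hiIcc).1
      refine sum_hat_le m hm2 h hh g hg S₂ hS₂1 (m * (i - 1)) _ ?_ ?_
      · rw [hxe]; exact hgrid i hi1
      · intro i' hi' heq
        have hlt := (Finset.mem_filter.1 hi').2
        rw [heq, hxe] at hlt
        linarith
    have E1 : ∑ j : Fin 9, ∑ i ∈ S₁, hat h (g i) (x j) = 9 := by
      calc ∑ j : Fin 9, ∑ i ∈ S₁, hat h (g i) (x j) = ∑ _j : Fin 9, (1 : ℝ) :=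
            Finset.sum_congr rfl fun j _ => e1 j
        _ = 9 := by simp
    have E2 : ∑ j : Fin 9, ∑ i ∈ S₂, hat h (g i) (x j) ≤ 9 * (1 - 2 / (m : ℝ)) := by
      calc ∑ j : Fin 9, ∑ i ∈ S₂, hat h (g i) (x j)
          ≤ ∑ _j : Fin 9, (1 - 2 / (m : ℝ)) := Finset.sum_le_sum fun j _ => e2 j
        _ = 9 * (1 - 2 / (m : ℝ)) := by simp; ring
    have hI1x : I₁ x = 9 - b := by rw [hI₁, E1]
    have hI2x : I₂ x < 0 := by rw [hI₂]; linarith [E2]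
    have r1 : relu (I₁ x) = 9 - b := by
      rw [hI1x]; unfold relu; exact max_eq_left (le_of_lt h9b)
    have r2 : relu (I₂ x) = 0 := by
      unfold relu; exact max_eq_right (le_of_lt hI2x)
    rw [hf, r1, r2, zero_div, sub_zero, div_self (ne_of_gt h9b)]
  · -- dark images
    intro x hx
    have e1 : ∀ j : Fin 9, ∑ i ∈ S₂, hat h (g i) (x j) = 1 := by
      intro j
      obtain ⟨i, hiIcc, hxe, hl⟩ := hx j
      exact sum_hat_eq_one m hm2 h hh g hg S₂ i (Finset.mem_filter.2 ⟨hiIcc, hl⟩) _ hxe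
    have e2 : ∀ j : Fin 9, ∑ i ∈ S₁, hat h (g i) (x j) ≤ 1 - 2 / (m : ℝ) := by
      intro j
      obtain ⟨i, hiIcc, hxe, hl⟩ := hx j
      have hi1 : 1 ≤ i := (Finset.mem_Icc.1 hiIcc).1
      refine sum_hat_le m hm2 h hh g hg S₁ hS₁1 (m * (i - 1)) _ ?_ ?_
      · rw [hxe]; exact hgrid i hi1
      · intro i' hi' heq
        have hge := (Finset.mem_filter.1 hi').2
        rw [heq, hxe] at hge
        linarith
    have E1 : ∑ j : Fin 9, ∑ i ∈ S₂, hat h (g i) (x j) = 9 := by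
      calc ∑ j : Fin 9, ∑ i ∈ S₂, hat h (g i) (x j) = ∑ _j : Fin 9, (1 : ℝ) :=
            Finset.sum_congr rfl fun j _ => e1 j
        _ = 9 := by simp
    have E2 : ∑ j : Fin 9, ∑ i ∈ S₁, hat h (g i) (x j) ≤ 9 * (1 - 2 / (m : ℝ)) := by
      calc ∑ j : Fin 9, ∑ i ∈ S₁, hat h (g i) (x j)
          ≤ ∑ _j : Fin 9, (1 - 2 / (m : ℝ)) := Finset.sum_le_sum fun j _ => e2 j
        _ = 9 * (1 - 2 / (m : ℝ)) := by simp; ring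
    have hI2x : I₂ x = 9 - b := by rw [hI₂, E1]
    have hI1x : I₁ x < 0 := by rw [hI₁]; linarith [E2]
    have r2 : relu (I₂ x) = 9 - b := by
      rw [hI2x]; unfold relu; exact max_eq_left (le_of_lt h9b)
    have r1 : relu (I₁ x) = 0 := by
      unfold relu; exact max_eq_right (le_of_lt hI1x)
    rw [hf, r1, r2, zero_div, div_self (ne_of_gt h9b)]
    ring
  · -- everything else
    intro p hp hnl hnd
    push_neg at hnl hnd
    obtain ⟨j₁, hj₁⟩ := hnl
    obtain ⟨j₂, hj₂⟩ := hnd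
    have bnd1 : ∀ j : Fin 9, ∑ i ∈ S₁, hat h (g i) (p j) ≤ 1 := by
      intro j
      obtain ⟨k, _, hpk⟩ := hp j
      exact sum_hat_le_one m hm2 h hh g hg S₁ hS₁1 k _ hpk
    have bnd2 : ∀ j : Fin 9, ∑ i ∈ S₂, hat h (g i) (p j) ≤ 1 := by
      intro j
      obtain ⟨k, _, hpk⟩ := hp j
      exact sum_hat_le_one m hm2 h hh g hg S₂ hS₂1 k _ hpk
    have bad1 : ∑ i ∈ S₁, hat h (g i) (p j₁) ≤ 1 - 2 / (m : ℝ) := by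
      obtain ⟨k, _, hpk⟩ := hp j₁
      refine sum_hat_le m hm2 h hh g hg S₁ hS₁1 k _ hpk ?_
      intro i hi heq
      have hmem := Finset.mem_filter.1 hi
      have := hj₁ i hmem.1 heq.symm
      linarith [hmem.2]
    have bad2 : ∑ i ∈ S₂, hat h (g i) (p j₂) ≤ 1 - 2 / (m : ℝ) := by
      obtain ⟨k, _, hpk⟩ := hp j₂
      refine sum_hat_le m hm2 h hh g hg S₂ hS₂1 k _ hpk ?_
      intro i hi heq
      have hmem := Finset.mem_filter.1 hi
      have := hj₂ i hmem.1 heq.symm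
      linarith [hmem.2]
    have T1 : ∑ j : Fin 9, ∑ i ∈ S₁, hat h (g i) (p j) ≤ 9 - 2 / (m : ℝ) := by
      have hsplit := Finset.sum_erase_add Finset.univ
        (fun j => ∑ i ∈ S₁, hat h (g i) (p j)) (Finset.mem_univ j₁)
      have hrest : ∑ j ∈ Finset.univ.erase j₁, ∑ i ∈ S₁, hat h (g i) (p j) ≤ 8 := by
        calc ∑ j ∈ Finset.univ.erase j₁, ∑ i ∈ S₁, hat h (g i) (p j)
            ≤ ∑ _j ∈ Finset.univ.erase j₁, (1 : ℝ) := Finset.sum_le_sum fun j _ => bnd1 j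
          _ = 8 := by simp
      linarith
    have T2 : ∑ j : Fin 9, ∑ i ∈ S₂, hat h (g i) (p j) ≤ 9 - 2 / (m : ℝ) := by
      have hsplit := Finset.sum_erase_add Finset.univ
        (fun j => ∑ i ∈ S₂, hat h (g i) (p j)) (Finset.mem_univ j₂)
      have hrest : ∑ j ∈ Finset.univ.erase j₂, ∑ i ∈ S₂, hat h (g i) (p j) ≤ 8 := by
        calc ∑ j ∈ Finset.univ.erase j₂, ∑ i ∈ S₂, hat h (g i) (p j)
            ≤ ∑ _j ∈ Finset.univ.erase j₂, (1 : ℝ) := Finset.sum_le_sum fun j _ => bnd2 j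
          _ = 8 := by simp
      linarith
    have hI1x : I₁ p < 0 := by rw [hI₁]; linarith
    have hI2x : I₂ p < 0 := by rw [hI₂]; linarith
    have r1 : relu (I₁ p) = 0 := by unfold relu; exact max_eq_right (le_of_lt hI1x)
    have r2 : relu (I₂ p) = 0 := by unfold relu; exact max_eq_right (le_of_lt hI2x)
    rw [hf, r1, r2, zero_div, sub_zero]
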